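/- Let s and t be coprime positive integers and n, m integers with 0 < n < s and 0 < m < t. For every τ ∈ ℂ with Im τ > 0 (writing q^x := exp(2πiτx)), the limit of q^{((ms)²+(nt)²)/(4st) − N/2} · 𝒥′_N(q) − ((3N² + 1)/4) · Φ_{s,t}^{(n,m)}(τ), as N → ∞ through odd positive integers, equals Σ_{k∈ℤ} k² ( q^{(2stk−nt−ms)²/(4st)} − q^{(2stk−nt+ms)²/(4st)} ). (The right-hand side is η(τ)·ch_q 𝒳_{n,m}^+, the character of the irreducible (s,t)-log VOA module 𝒳_{n,m}^+.) -/

import Mathlib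

open Complex Finset Filter

/-- `Q τ x = q^x = exp(2πiτx)` for real `x`. -/
noncomputable def Q (τ : ℂ) (x : ℝ) : ℂ := Complex.exp (2 * Real.pi * Complex.I * τ * x)

/-- The 2st-periodic function `χ_{2st}^{(n,m)}`. -/
def chi (s t n m k : ℤ) : ℤ :=
  if k ≡ n * t - m * s [ZMOD 2 * s * t] ∨ k ≡ -(n * t - m * s) [ZMOD 2 * s * t] then 1
  else if k ≡ n * t + m * s [ZMOD 2 * s * t] ∨ k ≡ -(n * t + m * s) [ZMOD 2 * s * t] then -1
  else 0

/-- The theta series `Φ_{s,t}^{(n,m)}(τ)`. -/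
noncomputable def Phi (s t n m : ℤ) (τ : ℂ) : ℂ :=
  (1 / 2) * ∑' k : ℤ, (chi s t n m k : ℂ) * Q τ ((k : ℝ) ^ 2 / (4 * s * t))

/-- The family `𝒥'_N(q; (n,m), 3s, 3t)` of colored Jones polynomials of `T_{3s,3t}`;
the inner index `r` runs over `-c/2, -c/2 + 1, …, c/2`, realized as `r = (2j - c)/2`
for `j = 0, 1, …, c`. -/
noncomputable def J' (s t n m : ℤ) (N : ℕ) (τ : ℂ) : ℂ :=
  (Q τ ((N : ℝ) / 2) - Q τ (-((N : ℝ) / 2)))⁻¹ *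
    ∑ b ∈ Finset.range N,
      ∑ c ∈ (Finset.Icc |2 * (b : ℤ) - N + 1| (2 * b + N - 1)).filter (fun c : ℤ => Odd (c + N)),
        ∑ j ∈ Finset.range (c.toNat + 1),
          (fun r : ℝ =>
            Q τ (((s * t : ℤ) : ℝ) * r ^ 2 - ((m * s + n * t : ℤ) : ℝ) * r
                + ((m * n : ℤ) : ℝ) / 2)
              - Q τ (((s * t : ℤ) : ℝ) * r ^ 2 - ((m * s - n * t : ℤ) : ℝ) * r
                - ((m * n : ℤ) : ℝ) / 2))
          (((2 * (j : ℤ) - c : ℤ) : ℝ) / 2)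

/-!
For odd `N = 2M + 1` the parity condition forces `c = 2d`, so `r` runs over the integers of
`[-d, d]` and the triple sum in `𝒥′_N` becomes `∑ r, W_M(r) G(r)`, where `W_M(r)` counts the pairs
`(b, d)` with `|b - M| ≤ d ≤ b + M` and `|r| ≤ d`. Completing the square,
`q^P G(r) = ψ(r) := q^((2str - nt - ms)²/4st) - q^((2str + nt - ms)²/4st)` with
`P = ((ms)² + (nt)²)/4st`. The total number of pairs is `W_M(0) = 3M² + 3M + 1 = (3N² + 1)/4`, and
the defect `D_M(r) = W_M(0) - W_M(r)` satisfies `0 ≤ D_M(r) ≤ r²`, with equality once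
`|r| ≤ M + 1`. Coprimality makes the residues `±(nt - ms)`, `±(nt + ms)` distinct modulo `2st`,
so splitting `χ` over them gives `∑ r, ψ(r) = -Φ`. Hence
`q^(P - N/2) 𝒥′_N - (3N² + 1)/4 · Φ = (q^N - 1)⁻¹ (-∑ r, D_M(r) ψ(r) - (3N² + 1)/4 · q^N Φ)`,
and as `N → ∞`, `N² q^N → 0` while `∑ r, D_M(r) ψ(r) → ∑ r, r² ψ(r)` by dominated convergence,
the Gaussian decay of `ψ` providing the bound `r² |ψ(r)|`.
-/

namespace ColoredJones

lemma Q_add (τ : ℂ) (x y : ℝ) : Q τ (x + y) = Q τ x * Q τ y := by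
  rw [Q, Q, Q, ← Complex.exp_add]
  congr 1
  push_cast
  ring

lemma Q_ne_zero (τ : ℂ) (x : ℝ) : Q τ x ≠ 0 := Complex.exp_ne_zero _

lemma Q_natCast (τ : ℂ) (N : ℕ) : Q τ N = Q τ 1 ^ N := by
  rw [Q, Q, ← Complex.exp_nat_mul]
  congr 1
  push_cast
  ring

lemma norm_Q_one_lt_one {τ : ℂ} (hτ : 0 < τ.im) : ‖Q τ 1‖ < 1 := by
  rw [Q, Complex.norm_exp, Real.exp_lt_one_iff]
  simpa using mul_pos (mul_pos two_pos Real.pi_pos) hτ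

lemma tendsto_pow_mul_Q_odd {τ : ℂ} (hτ : 0 < τ.im) (p : ℕ) :
    Tendsto (fun k : ℕ => ((2 * k + 1 : ℕ) : ℂ) ^ p * Q τ ((2 * k + 1 : ℕ) : ℝ)) atTop
      (nhds 0) := by
  have hodd : Tendsto (fun k : ℕ => 2 * k + 1) atTop atTop :=
    tendsto_atTop_atTop.mpr fun b => ⟨b, fun k hk => by omega⟩
  refine squeeze_zero_norm (fun k => le_of_eq ?_)
    ((tendsto_pow_const_mul_const_pow_of_lt_one p (norm_nonneg _) (norm_Q_one_lt_one hτ)).comp hodd)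
  rw [Q_natCast, norm_mul, norm_pow, norm_pow, Complex.norm_natCast, Function.comp_apply]

lemma Q_neg (τ : ℂ) (x : ℝ) : Q τ (-x) = (Q τ x)⁻¹ :=
  eq_inv_of_mul_eq_one_left <| by rw [← Q_add, neg_add_cancel, Q, ofReal_zero, mul_zero, exp_zero]

lemma Q_sub_half_mul_inv (τ : ℂ) (P N : ℝ) (z : ℂ) :
    Q τ (P - N / 2) * ((Q τ (N / 2) - Q τ (-(N / 2)))⁻¹ * (Q τ (-P) * z)) = (Q τ N - 1)⁻¹ * z := by
  have hN : Q τ N = Q τ (N / 2) * Q τ (N / 2) := by rw [← Q_add, add_halves]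
  have ha := Q_ne_zero τ (N / 2)
  have hb := Q_ne_zero τ P
  rw [sub_eq_add_neg, Q_add, Q_neg, Q_neg, hN]
  calc _ = Q τ P * (Q τ P)⁻¹ * ((Q τ (N / 2) * (Q τ (N / 2) - (Q τ (N / 2))⁻¹))⁻¹ * z) := by
        rw [mul_inv]
        ring
    _ = _ := by
        rw [mul_inv_cancel₀ hb, one_mul, mul_sub, mul_inv_cancel₀ ha]

lemma norm_Q_natCast_lt_one {τ : ℂ} (hτ : 0 < τ.im) {N : ℕ} (hN : N ≠ 0) : ‖Q τ N‖ < 1 := by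
  rw [Q_natCast, norm_pow]
  exact pow_lt_one₀ (norm_nonneg _) (norm_Q_one_lt_one hτ) hN

lemma norm_intCast_mul_le {c r : ℤ} (hc : |c| ≤ r ^ 2) (z : ℂ) :
    ‖(c : ℂ) * z‖ ≤ (r : ℝ) ^ 2 * ‖z‖ := by
  rw [norm_mul, Complex.norm_intCast]
  exact mul_le_mul_of_nonneg_right (by exact_mod_cast hc) (norm_nonneg _)

lemma tendsto_tsum_intCast_mul {ψ : ℤ → ℂ} (hψ : Summable fun r : ℤ => (r : ℝ) ^ 2 * ‖ψ r‖)
    {c : ℕ → ℤ → ℤ} (hc : ∀ k r, |c k r| ≤ r ^ 2) (hlim : ∀ r, ∀ᶠ k in atTop, c k r = r ^ 2) :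
    Tendsto (fun k => ∑' r, (c k r : ℂ) * ψ r) atTop (nhds (∑' r : ℤ, (r : ℂ) ^ 2 * ψ r)) :=
  tendsto_tsum_of_dominated_convergence hψ
    (fun r => tendsto_const_nhds.congr' <| (hlim r).mono fun k hk => by simp [hk])
    (.of_forall fun k r => norm_intCast_mul_le (hc k r) (ψ r))

section Weights

def jonesWeight (M : ℕ) (r : ℤ) : ℕ :=
  ∑ b ∈ range (2 * M + 1), ((b : ℤ) + M + 1 - max |(b : ℤ) - M| |r|).toNat

variable {β : Type*} [AddCommMonoid β]

lemma sum_range_eq_sum_Icc_neg (G : ℝ → β) {d : ℤ} (hd : 0 ≤ d) :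
    ∑ j ∈ range ((2 * d).toNat + 1), G (((2 * (j : ℤ) - 2 * d : ℤ) : ℝ) / 2)
      = ∑ ρ ∈ Icc (-d) d, G ρ := by
  refine sum_nbij' (fun j => (j : ℤ) - d) (fun ρ => (ρ + d).toNat) ?_ ?_ ?_ ?_ ?_
  · intro j hj
    simp only [mem_range, mem_Icc] at hj ⊢
    omega
  · intro ρ hρ
    simp only [mem_range, mem_Icc] at hρ ⊢
    omega
  · intro j hj
    simp only [mem_range] at hj
    omega
  · intro ρ hρ
    simp only [mem_Icc] at hρ
    omega
  · intro j _
    congr 1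
    push_cast
    ring

lemma filter_odd_add_eq_image (M b : ℕ) :
    (Icc |2 * (b : ℤ) - ((2 * M + 1 : ℕ) : ℤ) + 1| (2 * b + ((2 * M + 1 : ℕ) : ℤ) - 1)).filter
        (fun c : ℤ => Odd (c + ((2 * M + 1 : ℕ) : ℤ)))
      = (Icc |(b : ℤ) - M| (b + M)).image (2 * ·) := by
  ext c
  simp only [mem_filter, mem_Icc, mem_image, Int.odd_iff]
  push_cast
  simp only [Int.abs_eq_natAbs]
  constructor
  · intro h
    exact ⟨c / 2, by omega, by omega⟩
  · rintro ⟨d, hd, rfl⟩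
    omega

lemma sum_Icc_sum_Icc_neg_comm (G : ℝ → β) {M b : ℕ} (hb : b < 2 * M + 1) :
    ∑ d ∈ Icc |(b : ℤ) - M| (b + M), ∑ ρ ∈ Icc (-d) d, G ρ
      = ∑ ρ ∈ Icc (-(3 * (M : ℤ))) (3 * M),
          ((b : ℤ) + M + 1 - max |(b : ℤ) - M| |ρ|).toNat • G ρ := by
  rw [sum_comm' (t' := Icc (-((b : ℤ) + M)) (b + M))
      (s' := fun ρ => Icc (max |(b : ℤ) - M| |ρ|) (b + M))
      (by intro d ρ; simp only [mem_Icc, Int.abs_eq_natAbs]; omega)]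
  simp only [sum_const, Int.card_Icc]
  refine sum_subset (fun ρ hρ => ?_) (fun ρ _ hρ => ?_)
  · simp only [mem_Icc] at hρ ⊢
    omega
  · simp only [mem_Icc, not_and_or, not_le] at hρ
    rw [Int.toNat_eq_zero.2 (by simp only [Int.abs_eq_natAbs] at hρ ⊢; omega), zero_smul]

lemma sum_range_sub_eq_sum_Icc (M : ℕ) (f : ℤ → β) :
    ∑ b ∈ range (2 * M + 1), f (b - M) = ∑ a ∈ Icc (-(M : ℤ)) M, f a := by
  refine sum_nbij' (fun b => (b : ℤ) - M) (fun a => (a + M).toNat) ?_ ?_ ?_ ?_ fun _ _ => rfl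
  · intro b hb
    simp only [mem_range, mem_Icc] at hb ⊢
    omega
  · intro a ha
    simp only [mem_range, mem_Icc] at ha ⊢
    omega
  · intro b _
    omega
  · intro a ha
    simp only [mem_Icc] at ha
    omega

lemma sum_J'_eq (M : ℕ) (G : ℝ → β) :
    ∑ b ∈ range (2 * M + 1),
      ∑ c ∈ (Icc |2 * (b : ℤ) - ((2 * M + 1 : ℕ) : ℤ) + 1| (2 * b + ((2 * M + 1 : ℕ) : ℤ) - 1)).filter
          (fun c : ℤ => Odd (c + ((2 * M + 1 : ℕ) : ℤ))),
        ∑ j ∈ range (c.toNat + 1), G (((2 * (j : ℤ) - c : ℤ) : ℝ) / 2)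
      = ∑ r ∈ Icc (-(3 * (M : ℤ))) (3 * M), jonesWeight M r • G r := by
  calc _ = ∑ b ∈ range (2 * M + 1), ∑ r ∈ Icc (-(3 * (M : ℤ))) (3 * M),
          ((b : ℤ) + M + 1 - max |(b : ℤ) - M| |r|).toNat • G r := by
        refine sum_congr rfl fun b hb => ?_
        rw [filter_odd_add_eq_image, sum_image fun x _ y _ h => by simpa using h,
          sum_congr rfl fun d hd =>
            sum_range_eq_sum_Icc_neg G ((abs_nonneg _).trans (mem_Icc.1 hd).1),
          sum_Icc_sum_Icc_neg_comm G (mem_range.1 hb)]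
    _ = _ := by
        rw [sum_comm]
        simp only [jonesWeight, sum_smul]

def jonesDefect (M : ℕ) (r : ℤ) : ℤ := ((3 * M ^ 2 + 3 * M + 1 : ℕ) : ℤ) - jonesWeight M r

lemma jonesWeight_eq_zero {M : ℕ} {r : ℤ} (h : 3 * (M : ℤ) < |r|) : jonesWeight M r = 0 := by
  refine sum_eq_zero fun b hb => ?_
  simp only [mem_range] at hb
  simp only [Int.abs_eq_natAbs] at h ⊢
  omega

lemma sum_Icc_max_sub_abs {K ρ : ℕ} (h : ρ ≤ K + 1) :
    ∑ a ∈ Icc (-(K : ℤ)) K, max 0 ((ρ : ℤ) - |a|) = ρ ^ 2 := by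
  induction ρ with
  | zero =>
    refine sum_eq_zero fun a _ => ?_
    simp
  | succ ρ ih =>
    have hsplit : ∀ a : ℤ, max 0 (((ρ + 1 : ℕ) : ℤ) - |a|)
        = max 0 ((ρ : ℤ) - |a|) + if |a| ≤ ρ then 1 else 0 := fun a => by
      split_ifs <;> omega
    have hfilter : (Icc (-(K : ℤ)) K).filter (fun a : ℤ => |a| ≤ ρ) = Icc (-(ρ : ℤ)) ρ := by
      ext a
      simp only [mem_filter, mem_Icc, abs_le]
      omega
    rw [sum_congr rfl fun a _ => hsplit a, sum_add_distrib, ih (by omega), sum_boole, hfilter,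
      Int.card_Icc, Int.toNat_of_nonneg (by omega)]
    push_cast
    ring

lemma sum_toNat_add_one_sub_abs (M : ℕ) :
    ∑ b ∈ range (2 * M + 1), ((b : ℤ) + M + 1 - |(b : ℤ) - M|).toNat = 3 * M ^ 2 + 3 * M + 1 := by
  have hodd : ∀ K, ∑ b ∈ range K, (2 * b + 1) = K ^ 2 := fun K => by
    induction K with
    | zero => simp
    | succ K ih => rw [sum_range_succ, ih]; ring
  have hlow : ∑ b ∈ range M, ((b : ℤ) + M + 1 - |(b : ℤ) - M|).toNat = ∑ b ∈ range M, (2 * b + 1) :=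
    sum_congr rfl fun b hb => by
      simp only [mem_range] at hb
      simp only [Int.abs_eq_natAbs]
      omega
  have hhigh : ∑ b ∈ Ico M (2 * M + 1), ((b : ℤ) + M + 1 - |(b : ℤ) - M|).toNat
      = ∑ _b ∈ Ico M (2 * M + 1), (2 * M + 1) :=
    sum_congr rfl fun b hb => by
      simp only [mem_Ico] at hb
      simp only [Int.abs_eq_natAbs]
      omega
  rw [← sum_range_add_sum_Ico _ (by omega : M ≤ 2 * M + 1), hlow, hhigh, hodd, sum_const,
    Nat.card_Ico, smul_eq_mul, show 2 * M + 1 - M = M + 1 by omega]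
  ring

lemma jonesDefect_eq_sum (M : ℕ) (r : ℤ) :
    jonesDefect M r
      = ∑ b ∈ range (2 * M + 1),
          (min ((b : ℤ) + M + 1) (max |(b : ℤ) - M| |r|) - |(b : ℤ) - M|) := by
  rw [jonesDefect, jonesWeight, ← sum_toNat_add_one_sub_abs, Nat.cast_sum, Nat.cast_sum,
    ← sum_sub_distrib]
  refine sum_congr rfl fun b hb => ?_
  simp only [mem_range] at hb
  simp only [Int.abs_eq_natAbs]
  omega

lemma jonesDefect_nonneg (M : ℕ) (r : ℤ) : 0 ≤ jonesDefect M r := by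
  rw [jonesDefect_eq_sum]
  refine sum_nonneg fun b hb => ?_
  simp only [mem_range] at hb
  simp only [Int.abs_eq_natAbs]
  omega

lemma jonesDefect_le_sq (M : ℕ) (r : ℤ) : jonesDefect M r ≤ r ^ 2 := by
  calc jonesDefect M r
      ≤ ∑ b ∈ range (2 * M + 1), max 0 ((r.natAbs : ℤ) - |(b : ℤ) - M|) := by
        rw [jonesDefect_eq_sum]
        refine sum_le_sum fun b hb => ?_
        simp only [mem_range] at hb
        simp only [Int.abs_eq_natAbs]
        omega
    _ ≤ ∑ a ∈ Icc (-((M + r.natAbs : ℕ) : ℤ)) (M + r.natAbs : ℕ), max 0 ((r.natAbs : ℤ) - |a|) := by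
        rw [sum_range_sub_eq_sum_Icc M fun a => max 0 ((r.natAbs : ℤ) - |a|)]
        refine sum_le_sum_of_subset_of_nonneg (fun a ha => ?_) fun _ _ _ => le_max_left _ _
        simp only [mem_Icc] at ha ⊢
        omega
    _ = r ^ 2 := by
        rw [sum_Icc_max_sub_abs (by omega), Int.natCast_natAbs, sq_abs]

lemma jonesDefect_eq_sq {M : ℕ} {r : ℤ} (h : |r| ≤ M + 1) : jonesDefect M r = r ^ 2 := by
  calc jonesDefect M r
      = ∑ b ∈ range (2 * M + 1), max 0 ((r.natAbs : ℤ) - |(b : ℤ) - M|) := by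
        rw [jonesDefect_eq_sum]
        refine sum_congr rfl fun b hb => ?_
        simp only [mem_range] at hb
        simp only [Int.abs_eq_natAbs] at h ⊢
        omega
    _ = r ^ 2 := by
        rw [sum_range_sub_eq_sum_Icc M fun a => max 0 ((r.natAbs : ℤ) - |a|),
          sum_Icc_max_sub_abs (by simp only [Int.abs_eq_natAbs] at h; omega), Int.natCast_natAbs,
          sq_abs]

lemma abs_jonesDefect_le (M : ℕ) (r : ℤ) : |jonesDefect M r| ≤ r ^ 2 :=
  abs_le.2 ⟨by linarith [jonesDefect_nonneg M r, sq_nonneg r], jonesDefect_le_sq M r⟩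

lemma sum_jonesWeight_mul (M : ℕ) {ψ : ℤ → ℂ} (hψ : Summable ψ)
    (hψ2 : Summable fun r : ℤ => (r : ℝ) ^ 2 * ‖ψ r‖) :
    ∑ r ∈ Icc (-(3 * (M : ℤ))) (3 * M), (jonesWeight M r : ℂ) * ψ r
      = (3 * M ^ 2 + 3 * M + 1) * ∑' r, ψ r - ∑' r, (jonesDefect M r : ℂ) * ψ r := by
  have hdefect : Summable fun r => (jonesDefect M r : ℂ) * ψ r :=
    .of_norm_bounded hψ2 fun r => norm_intCast_mul_le (abs_jonesDefect_le M r) (ψ r)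
  have hsupp : ∀ r ∉ Icc (-(3 * (M : ℤ))) (3 * M), (jonesWeight M r : ℂ) * ψ r = 0 := fun r hr => by
    rw [jonesWeight_eq_zero, Nat.cast_zero, zero_mul]
    simp only [mem_Icc, not_and_or, not_le] at hr
    simp only [Int.abs_eq_natAbs]
    omega
  rw [← tsum_eq_sum (L := .unconditional ℤ) hsupp, ← tsum_mul_left,
    ← (hψ.mul_left _).tsum_sub hdefect]
  refine tsum_congr fun r => ?_
  rw [jonesDefect]
  push_cast
  ring

end Weights

section Theta

variable {s t n m : ℤ} {τ : ℂ}

noncomputable def thetaTerm (s t : ℤ) (τ : ℂ) (e r : ℤ) : ℂ :=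
  Q τ (((2 * s * t * r + e : ℤ) : ℝ) ^ 2 / (4 * s * t))

lemma thetaTerm_eq_mul_jacobiTheta₂_term (hs : s ≠ 0) (ht : t ≠ 0) (e r : ℤ) :
    thetaTerm s t τ e r
      = Q τ ((e : ℝ) ^ 2 / (4 * s * t)) * jacobiTheta₂_term r (e * τ) (2 * s * t * τ) := by
  rw [thetaTerm, Q, Q, jacobiTheta₂_term, ← Complex.exp_add]
  congr 1
  push_cast
  field_simp
  ring

lemma summable_pow_mul_norm_thetaTerm (hs : 0 < s) (ht : 0 < t) (hτ : 0 < τ.im) (e : ℤ) (k : ℕ) :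
    Summable fun r : ℤ => ((|r| : ℤ) : ℝ) ^ k * ‖thetaTerm s t τ e r‖ := by
  have hT : 0 < (2 * s * t * τ : ℂ).im := by
    simpa using mul_pos (mul_pos (mul_pos two_pos (Int.cast_pos.2 hs)) (Int.cast_pos.2 ht)) hτ
  refine ((summable_pow_mul_jacobiTheta₂_term_bound |(e * τ : ℂ).im| hT k).mul_left
    ‖Q τ ((e : ℝ) ^ 2 / (4 * s * t))‖).of_nonneg_of_le (fun r => by positivity) fun r => ?_
  rw [thetaTerm_eq_mul_jacobiTheta₂_term hs.ne' ht.ne', norm_mul, mul_left_comm]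
  exact mul_le_mul_of_nonneg_left (mul_le_mul_of_nonneg_left
    (norm_jacobiTheta₂_term_le hT le_rfl le_rfl r) (by positivity)) (norm_nonneg _)

lemma summable_thetaTerm (hs : 0 < s) (ht : 0 < t) (hτ : 0 < τ.im) (e : ℤ) :
    Summable (thetaTerm s t τ e) :=
  .of_norm <| by simpa using summable_pow_mul_norm_thetaTerm hs ht hτ e 0

lemma summable_sq_mul_thetaTerm (hs : 0 < s) (ht : 0 < t) (hτ : 0 < τ.im) (e : ℤ) :
    Summable fun r : ℤ => (r : ℂ) ^ 2 * thetaTerm s t τ e r :=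
  .of_norm <| (summable_pow_mul_norm_thetaTerm hs ht hτ e 2).congr fun r => by
    rw [norm_mul, norm_pow, Complex.norm_intCast, Int.cast_abs]

lemma thetaTerm_neg (e r : ℤ) : thetaTerm s t τ (-e) (-r) = thetaTerm s t τ e r := by
  rw [thetaTerm, thetaTerm]
  congr 2
  push_cast
  ring

lemma tsum_mul_thetaTerm_neg {g : ℤ → ℂ} (hg : ∀ r, g (-r) = g r) (e : ℤ) :
    ∑' r, g r * thetaTerm s t τ (-e) r = ∑' r, g r * thetaTerm s t τ e r := by
  rw [← (Equiv.neg ℤ).tsum_eq]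
  simp only [Equiv.neg_apply, hg, thetaTerm_neg]

lemma tsum_thetaTerm_neg (e : ℤ) : ∑' r, thetaTerm s t τ (-e) r = ∑' r, thetaTerm s t τ e r := by
  simpa using tsum_mul_thetaTerm_neg (τ := τ) (g := 1) (fun _ => rfl) e

lemma hasSum_ite_modEq (hs : 0 < s) (ht : 0 < t) (hτ : 0 < τ.im) (e : ℤ) :
    HasSum (fun k : ℤ => if k ≡ e [ZMOD 2 * s * t] then Q τ ((k : ℝ) ^ 2 / (4 * s * t)) else 0)
      (∑' r, thetaTerm s t τ e r) := by
  have hinj : Function.Injective fun r : ℤ => 2 * s * t * r + e := fun x y h => by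
    simpa [hs.ne', ht.ne'] using h
  refine (hinj.hasSum_iff fun k hk => if_neg fun hke => hk ?_).mp ?_
  · obtain ⟨r, hr⟩ := Int.modEq_iff_dvd.mp hke
    exact ⟨-r, by linarith⟩
  · convert (summable_thetaTerm hs ht hτ e).hasSum using 1
    ext r
    simp [thetaTerm, Int.ModEq]

lemma chi_eq_ite (hs : 0 < s) (ht : 0 < t) (hst : IsCoprime s t) (hn : 0 < n) (hns : n < s)
    (hm : 0 < m) (hmt : m < t) (k : ℤ) :
    chi s t n m k
      = (if k ≡ n * t - m * s [ZMOD 2 * s * t] then 1 else 0)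
        + (if k ≡ -(n * t - m * s) [ZMOD 2 * s * t] then 1 else 0)
        - (if k ≡ n * t + m * s [ZMOD 2 * s * t] then 1 else 0)
        - (if k ≡ -(n * t + m * s) [ZMOD 2 * s * t] then 1 else 0) := by
  have hdvd : ¬ s ∣ n * t := fun h =>
    absurd (Int.le_of_dvd hn (hst.dvd_of_dvd_mul_right h)) (by omega)
  have hms : 0 < m * s ∧ m * s < s * t := ⟨by positivity, by nlinarith⟩
  have hnt : 0 < n * t ∧ n * t < s * t := ⟨by positivity, by nlinarith⟩
  have hne : n * t ≠ m * s := fun h => hdvd ⟨m, by linarith⟩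
  have hne' : n * t + m * s ≠ s * t := fun h => hdvd ⟨t - m, by linarith⟩
  -- lets `omega` relate its atoms `2 * s * t` and `s * t`
  have hN : 2 * s * t = 2 * (s * t) := mul_assoc ..
  have hsep : ∀ x y : ℤ, x ≠ y → y - x < 2 * s * t → x - y < 2 * s * t →
      ¬ x ≡ y [ZMOD 2 * s * t] := fun x y hxy h₁ h₂ h =>
    hxy (by linarith [Int.eq_zero_of_abs_lt_dvd h.dvd (abs_sub_lt_iff.2 ⟨h₁, h₂⟩)])
  have hB : ¬ n * t + m * s ≡ -(n * t + m * s) [ZMOD 2 * s * t] := fun h => by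
    have : s * t ∣ n * t + m * s - s * t := by
      obtain ⟨c, hc⟩ := h.dvd
      exact ⟨-c - 1, by linarith⟩
    exact hne' (by
      linarith [Int.eq_zero_of_abs_lt_dvd this (abs_sub_lt_iff.2 ⟨by omega, by omega⟩)])
  have h1 := hsep (n * t - m * s) (-(n * t - m * s)) (by omega) (by omega) (by omega)
  have h2 := hsep (n * t - m * s) (n * t + m * s) (by omega) (by omega) (by omega)
  have h3 := hsep (n * t - m * s) (-(n * t + m * s)) (by omega) (by omega) (by omega)
  have h4 := hsep (-(n * t - m * s)) (n * t + m * s) (by omega) (by omega) (by omega)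
  have h5 := hsep (-(n * t - m * s)) (-(n * t + m * s)) (by omega) (by omega) (by omega)
  simp only [chi]
  split_ifs <;> simp only [Int.ModEq] at * <;> omega

lemma Phi_eq_tsum_sub (hs : 0 < s) (ht : 0 < t) (hst : IsCoprime s t) (hn : 0 < n) (hns : n < s)
    (hm : 0 < m) (hmt : m < t) (hτ : 0 < τ.im) :
    Phi s t n m τ
      = ∑' r, thetaTerm s t τ (n * t - m * s) r - ∑' r, thetaTerm s t τ (n * t + m * s) r := by
  have h := (((hasSum_ite_modEq hs ht hτ (n * t - m * s)).add
    (hasSum_ite_modEq hs ht hτ (-(n * t - m * s)))).sub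
    (hasSum_ite_modEq hs ht hτ (n * t + m * s))).sub
    (hasSum_ite_modEq hs ht hτ (-(n * t + m * s)))
  have hPhi : HasSum (fun k : ℤ => (chi s t n m k : ℂ) * Q τ ((k : ℝ) ^ 2 / (4 * s * t))) _ :=
    h.congr_fun fun k => by
      rw [chi_eq_ite hs ht hst hn hns hm hmt k]
      simp only [Int.cast_add, Int.cast_sub, Int.cast_ite, Int.cast_one, Int.cast_zero, add_mul,
        sub_mul, ite_mul, one_mul, zero_mul]
  rw [Phi, hPhi.tsum_eq, tsum_thetaTerm_neg, tsum_thetaTerm_neg]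
  ring

noncomputable def psi (s t n m : ℤ) (τ : ℂ) (r : ℤ) : ℂ :=
  thetaTerm s t τ (-(n * t + m * s)) r - thetaTerm s t τ (n * t - m * s) r

lemma summable_psi (hs : 0 < s) (ht : 0 < t) (hτ : 0 < τ.im) : Summable (psi s t n m τ) :=
  (summable_thetaTerm hs ht hτ _).sub (summable_thetaTerm hs ht hτ _)

lemma summable_sq_mul_norm_psi (hs : 0 < s) (ht : 0 < t) (hτ : 0 < τ.im) :
    Summable fun r : ℤ => (r : ℝ) ^ 2 * ‖psi s t n m τ r‖ := by
  refine ((summable_pow_mul_norm_thetaTerm hs ht hτ (-(n * t + m * s)) 2).add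
    (summable_pow_mul_norm_thetaTerm hs ht hτ (n * t - m * s) 2)).of_nonneg_of_le
    (fun r => by positivity) fun r => ?_
  rw [Int.cast_abs, sq_abs, ← mul_add]
  exact mul_le_mul_of_nonneg_left (norm_sub_le _ _) (sq_nonneg _)

lemma tsum_psi (hs : 0 < s) (ht : 0 < t) (hst : IsCoprime s t) (hn : 0 < n) (hns : n < s)
    (hm : 0 < m) (hmt : m < t) (hτ : 0 < τ.im) :
    ∑' r, psi s t n m τ r = -Phi s t n m τ := by
  unfold psi
  rw [(summable_thetaTerm hs ht hτ _).tsum_sub (summable_thetaTerm hs ht hτ _),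
    tsum_thetaTerm_neg, Phi_eq_tsum_sub hs ht hst hn hns hm hmt hτ, neg_sub]

lemma tsum_sq_mul_psi (hs : 0 < s) (ht : 0 < t) (hτ : 0 < τ.im) :
    ∑' r : ℤ, (r : ℂ) ^ 2 *
        (Q τ (((2 * s * t * r - n * t - m * s : ℤ) : ℝ) ^ 2 / (4 * s * t))
          - Q τ (((2 * s * t * r - n * t + m * s : ℤ) : ℝ) ^ 2 / (4 * s * t)))
      = ∑' r : ℤ, (r : ℂ) ^ 2 * psi s t n m τ r := by
  have hterm : ∀ r : ℤ, (r : ℂ) ^ 2 *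
        (Q τ (((2 * s * t * r - n * t - m * s : ℤ) : ℝ) ^ 2 / (4 * s * t))
          - Q τ (((2 * s * t * r - n * t + m * s : ℤ) : ℝ) ^ 2 / (4 * s * t)))
      = (r : ℂ) ^ 2 * thetaTerm s t τ (-(n * t + m * s)) r
          - (r : ℂ) ^ 2 * thetaTerm s t τ (-(n * t - m * s)) r := fun r => by
    rw [thetaTerm, thetaTerm, ← mul_sub, show 2 * s * t * r - n * t - m * s
      = 2 * s * t * r + -(n * t + m * s) by ring, show 2 * s * t * r - n * t + m * s
      = 2 * s * t * r + -(n * t - m * s) by ring]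
  rw [tsum_congr hterm, (summable_sq_mul_thetaTerm hs ht hτ _).tsum_sub
      (summable_sq_mul_thetaTerm hs ht hτ _), tsum_mul_thetaTerm_neg (by simp) (n * t - m * s),
    ← (summable_sq_mul_thetaTerm hs ht hτ _).tsum_sub (summable_sq_mul_thetaTerm hs ht hτ _)]
  simp only [psi, mul_sub]

lemma J'_summand_eq (hs : s ≠ 0) (ht : t ≠ 0) (r : ℤ) :
    Q τ (((s * t : ℤ) : ℝ) * (r : ℝ) ^ 2 - ((m * s + n * t : ℤ) : ℝ) * r + ((m * n : ℤ) : ℝ) / 2)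
        - Q τ (((s * t : ℤ) : ℝ) * (r : ℝ) ^ 2 - ((m * s - n * t : ℤ) : ℝ) * r
          - ((m * n : ℤ) : ℝ) / 2)
      = Q τ (-((((m * s) ^ 2 + (n * t) ^ 2 : ℤ) : ℝ) / (4 * s * t))) * psi s t n m τ r := by
  rw [psi, thetaTerm, thetaTerm, mul_sub, ← Q_add, ← Q_add]
  congr 2 <;> push_cast <;> field_simp <;> ring

lemma J'_odd_eq (hs : s ≠ 0) (ht : t ≠ 0) (M : ℕ) :
    J' s t n m (2 * M + 1) τ
      = (Q τ (((2 * M + 1 : ℕ) : ℝ) / 2) - Q τ (-(((2 * M + 1 : ℕ) : ℝ) / 2)))⁻¹ *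
        (Q τ (-((((m * s) ^ 2 + (n * t) ^ 2 : ℤ) : ℝ) / (4 * s * t))) *
          ∑ r ∈ Icc (-(3 * (M : ℤ))) (3 * M), (jonesWeight M r : ℂ) * psi s t n m τ r) := by
  have hsum := sum_J'_eq (β := ℂ) M fun x : ℝ =>
    Q τ (((s * t : ℤ) : ℝ) * x ^ 2 - ((m * s + n * t : ℤ) : ℝ) * x + ((m * n : ℤ) : ℝ) / 2)
      - Q τ (((s * t : ℤ) : ℝ) * x ^ 2 - ((m * s - n * t : ℤ) : ℝ) * x - ((m * n : ℤ) : ℝ) / 2)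
  refine (congrArg _ hsum).trans ?_
  congr 1
  rw [mul_sum]
  refine sum_congr rfl fun r _ => ?_
  rw [nsmul_eq_mul, J'_summand_eq hs ht]
  ring

lemma Q_mul_J'_sub_mul_Phi (hs : 0 < s) (ht : 0 < t) (hst : IsCoprime s t) (hn : 0 < n)
    (hns : n < s) (hm : 0 < m) (hmt : m < t) (hτ : 0 < τ.im) (M : ℕ) :
    Q τ ((((m * s) ^ 2 + (n * t) ^ 2 : ℤ) : ℝ) / (4 * s * t) - ((2 * M + 1 : ℕ) : ℝ) / 2)
        * J' s t n m (2 * M + 1) τ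
      - ((3 * ((2 * M + 1 : ℕ) : ℂ) ^ 2 + 1) / 4) * Phi s t n m τ
      = (Q τ ((2 * M + 1 : ℕ) : ℝ) - 1)⁻¹ * (-∑' r, (jonesDefect M r : ℂ) * psi s t n m τ r
          - (3 * ((2 * M + 1 : ℕ) : ℂ) ^ 2 + 1) / 4 * Q τ ((2 * M + 1 : ℕ) : ℝ)
            * Phi s t n m τ) := by
  have hx : Q τ ((2 * M + 1 : ℕ) : ℝ) - 1 ≠ 0 :=
    sub_ne_zero.2 fun h =>
      (norm_Q_natCast_lt_one hτ (N := 2 * M + 1) (by omega)).ne (by rw [h, norm_one])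
  have hcoef : (3 * (M : ℂ) ^ 2 + 3 * M + 1) = (3 * ((2 * M + 1 : ℕ) : ℂ) ^ 2 + 1) / 4 := by
    push_cast
    ring
  rw [J'_odd_eq hs.ne' ht.ne', sum_jonesWeight_mul M (summable_psi hs ht hτ)
    (summable_sq_mul_norm_psi hs ht hτ), tsum_psi hs ht hst hn hns hm hmt hτ, hcoef,
    Q_sub_half_mul_inv]
  field_simp
  ring

end Theta

end ColoredJones

open ColoredJones in
theorem statement9 (s t n m : ℤ) (hs : 0 < s) (ht : 0 < t) (hst : IsCoprime s t)
    (hn : 0 < n) (hns : n < s) (hm : 0 < m) (hmt : m < t)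
    (τ : ℂ) (hτ : 0 < τ.im) :
    Tendsto (fun k : ℕ =>
        Q τ ((((m * s) ^ 2 + (n * t) ^ 2 : ℤ) : ℝ) / (4 * s * t) - ((2 * k + 1 : ℕ) : ℝ) / 2)
            * J' s t n m (2 * k + 1) τ
          - ((3 * ((2 * k + 1 : ℕ) : ℂ) ^ 2 + 1) / 4) * Phi s t n m τ)
      atTop
      (nhds (∑' k : ℤ, (k : ℂ) ^ 2 *
        (Q τ (((2 * s * t * k - n * t - m * s : ℤ) : ℝ) ^ 2 / (4 * s * t))
          - Q τ (((2 * s * t * k - n * t + m * s : ℤ) : ℝ) ^ 2 / (4 * s * t))))) := by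
  have hx := tendsto_pow_mul_Q_odd hτ 0
  have hTx : Tendsto (fun k : ℕ => (3 * ((2 * k + 1 : ℕ) : ℂ) ^ 2 + 1) / 4
      * Q τ ((2 * k + 1 : ℕ) : ℝ)) atTop (nhds 0) := by
    simpa [add_mul, mul_assoc, div_eq_mul_inv, mul_comm, mul_left_comm] using
      (((tendsto_pow_mul_Q_odd hτ 2).const_mul 3).add hx).mul_const (4⁻¹ : ℂ)
  have hdefect := tendsto_tsum_intCast_mul (summable_sq_mul_norm_psi hs ht hτ (n := n) (m := m))
    (abs_jonesDefect_le) fun r => (eventually_ge_atTop r.natAbs).mono fun k hk =>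
      jonesDefect_eq_sq (by rw [Int.abs_eq_natAbs]; omega)
  rw [tsum_sq_mul_psi hs ht hτ]
  refine Tendsto.congr (fun k => (Q_mul_J'_sub_mul_Phi hs ht hst hn hns hm hmt hτ k).symm) ?_
  simpa using ((hx.sub_const 1).inv₀ (by norm_num)).mul
    (hdefect.neg.sub (hTx.mul_const (Phi s t n m τ)))
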